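/- All rules of G3cp are height-preserving invertible. In particular: if Γ ⊢ A→B, Δ is derivable with height at most n then Γ, A ⊢ B, Δ is derivable with height at most n; and if Γ, A→B ⊢ Δ is derivable with height at most n, then both Γ ⊢ A, Δ and Γ, B ⊢ Δ are derivable with height at most n. -/

import Mathlib

inductive Formula where
  | atom : ℕ → Formula
  | top : Formula
  | bot : Formula
  | and : Formula → Formula → Formula
  | or : Formula → Formula → Formula
  | imp : Formula → Formula → Formula

open Formula

/-- `Der n Γ Δ` : the sequent `Γ ⊢ Δ` is derivable in the classical
multi-conclusion system G3cp with height at most `n`. -/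
inductive Der : ℕ → Multiset Formula → Multiset Formula → Prop where
  | ax (n : ℕ) (Γ Δ : Multiset Formula) (p : ℕ) :
      Der (n + 1) (atom p ::ₘ Γ) (atom p ::ₘ Δ)
  | topR (n : ℕ) (Γ Δ : Multiset Formula) : Der (n + 1) Γ (top ::ₘ Δ)
  | topL {n Γ Δ} : Der n Γ Δ → Der (n + 1) (top ::ₘ Γ) Δ
  | botL (n : ℕ) (Γ Δ : Multiset Formula) : Der (n + 1) (bot ::ₘ Γ) Δ
  | andL {n Γ Δ A B} : Der n (A ::ₘ B ::ₘ Γ) Δ →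
      Der (n + 1) (and A B ::ₘ Γ) Δ
  | andR {n Γ Δ A B} : Der n Γ (A ::ₘ Δ) → Der n Γ (B ::ₘ Δ) →
      Der (n + 1) Γ (and A B ::ₘ Δ)
  | orL {n Γ Δ A B} : Der n (A ::ₘ Γ) Δ → Der n (B ::ₘ Γ) Δ →
      Der (n + 1) (or A B ::ₘ Γ) Δ
  | orR {n Γ Δ A B} : Der n Γ (A ::ₘ B ::ₘ Δ) →
      Der (n + 1) Γ (or A B ::ₘ Δ)
  | impL {n Γ Δ A B} : Der n Γ (A ::ₘ Δ) → Der n (B ::ₘ Γ) Δ →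
      Der (n + 1) (imp A B ::ₘ Γ) Δ
  | impR {n Γ Δ A B} : Der n (A ::ₘ Γ) (B ::ₘ Δ) →
      Der (n + 1) Γ (imp A B ::ₘ Δ)

/-!
Induction on the derivation. If the implication is principal in the last rule, its premises are
already the sequents wanted, at a smaller height. Otherwise it lies in the side context of the last
rule: the induction hypothesis inverts it in every premise, and the same rule is applied again.
Axioms and the zero-premise rules admit arbitrary side formulas, so they stay valid after inversion.
-/

theorem Der.succ {n : ℕ} {Γ Δ : Multiset Formula} (h : Der n Γ Δ) : Der (n + 1) Γ Δ := by
  induction h with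
  | ax => exact .ax ..
  | topR => exact .topR ..
  | topL _ ih => exact .topL ih
  | botL => exact .botL ..
  | andL _ ih => exact .andL ih
  | andR _ _ ih₁ ih₂ => exact .andR ih₁ ih₂
  | orL _ _ ih₁ ih₂ => exact .orL ih₁ ih₂
  | orR _ ih => exact .orR ih
  | impL _ _ ih₁ ih₂ => exact .impL ih₁ ih₂
  | impR _ ih => exact .impR ih

theorem Multiset.exists_cons_of_cons_eq_cons_of_ne {α : Type*} {a b : α} {s t : Multiset α}
    (h : a ::ₘ s = b ::ₘ t) (hne : a ≠ b) : ∃ u, s = b ::ₘ u ∧ t = a ::ₘ u :=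
  ((Multiset.cons_eq_cons.mp h).resolve_left fun h ↦ hne h.1).2

-- `simpa only [cons_swap]` sorts the heads of both multisets the same way, so it identifies
-- sequents that differ only in the order of their formulas.
open Multiset in
theorem Der.inv_impR {n : ℕ} {Γ S Δ : Multiset Formula} {A B : Formula} (h : Der n Γ S)
    (hS : S = imp A B ::ₘ Δ) : Der n (A ::ₘ Γ) (B ::ₘ Δ) := by
  induction h generalizing Δ with
  | ax m Γ _ p =>
    obtain ⟨Δ, rfl, rfl⟩ := exists_cons_of_cons_eq_cons_of_ne hS.symm (by simp)
    simpa only [cons_swap] using Der.ax m (A ::ₘ Γ) (B ::ₘ Δ) p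
  | topR m Γ _ =>
    obtain ⟨Δ, rfl, rfl⟩ := exists_cons_of_cons_eq_cons_of_ne hS.symm (by simp)
    simpa only [cons_swap] using Der.topR m (A ::ₘ Γ) (B ::ₘ Δ)
  | topL _ ih => simpa only [cons_swap] using (ih hS).topL
  | botL m Γ => simpa only [cons_swap] using Der.botL m (A ::ₘ Γ) (B ::ₘ Δ)
  | andL _ ih =>
    simpa only [cons_swap] using Der.andL (Γ := A ::ₘ _) (by simpa only [cons_swap] using ih hS)
  | andR _ _ ih₁ ih₂ =>
    obtain ⟨Δ, rfl, rfl⟩ := exists_cons_of_cons_eq_cons_of_ne hS.symm (by simp)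
    simpa only [cons_swap] using Der.andR (Δ := B ::ₘ Δ)
      (by simpa only [cons_swap] using ih₁ (cons_swap ..))
      (by simpa only [cons_swap] using ih₂ (cons_swap ..))
  | orL _ _ ih₁ ih₂ =>
    simpa only [cons_swap] using Der.orL (Γ := A ::ₘ _)
      (by simpa only [cons_swap] using ih₁ hS) (by simpa only [cons_swap] using ih₂ hS)
  | orR _ ih =>
    obtain ⟨Δ, rfl, rfl⟩ := exists_cons_of_cons_eq_cons_of_ne hS.symm (by simp)
    simpa only [cons_swap] using Der.orR (Δ := B ::ₘ Δ)
      (by simpa only [cons_swap] using ih (by simp only [cons_swap]))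
  | impL _ _ ih₁ ih₂ =>
    subst hS
    simpa only [cons_swap] using Der.impL (Γ := A ::ₘ _)
      (by simpa only [cons_swap] using ih₁ (cons_swap ..))
      (by simpa only [cons_swap] using ih₂ rfl)
  | @impR _ _ _ C D h ih =>
    rcases cons_eq_cons.mp hS.symm with ⟨hCD, rfl⟩ | ⟨-, Δ, rfl, rfl⟩
    · obtain ⟨rfl, rfl⟩ := Formula.imp.inj hCD
      exact h.succ
    · simpa only [cons_swap] using Der.impR (Δ := B ::ₘ Δ)
        (by simpa only [cons_swap] using ih (cons_swap ..))

open Multiset in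
theorem Der.inv_impL {n : ℕ} {S Γ Δ : Multiset Formula} {A B : Formula} (h : Der n S Δ)
    (hS : S = imp A B ::ₘ Γ) : Der n Γ (A ::ₘ Δ) ∧ Der n (B ::ₘ Γ) Δ := by
  induction h generalizing Γ with
  | ax m _ Δ p =>
    obtain ⟨Γ, rfl, rfl⟩ := exists_cons_of_cons_eq_cons_of_ne hS.symm (by simp)
    exact ⟨by simpa only [cons_swap] using Der.ax m Γ (A ::ₘ Δ) p,
      by simpa only [cons_swap] using Der.ax m (B ::ₘ Γ) Δ p⟩
  | topR m _ Δ =>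
    subst hS
    exact ⟨by simpa only [cons_swap] using Der.topR m Γ (A ::ₘ Δ), .topR ..⟩
  | topL _ ih =>
    obtain ⟨Γ, rfl, rfl⟩ := exists_cons_of_cons_eq_cons_of_ne hS.symm (by simp)
    obtain ⟨hA, hB⟩ := ih rfl
    exact ⟨hA.topL, by simpa only [cons_swap] using hB.topL⟩
  | botL m _ Δ =>
    obtain ⟨Γ, rfl, rfl⟩ := exists_cons_of_cons_eq_cons_of_ne hS.symm (by simp)
    exact ⟨.botL .., by simpa only [cons_swap] using Der.botL m (B ::ₘ Γ) Δ⟩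
  | @andL _ _ _ C D _ ih =>
    obtain ⟨Γ, rfl, rfl⟩ := exists_cons_of_cons_eq_cons_of_ne hS.symm (by simp)
    obtain ⟨hA, hB⟩ := ih (Γ := C ::ₘ D ::ₘ Γ) (by simp only [cons_swap])
    exact ⟨hA.andL, by simpa only [cons_swap] using
      (Der.andL (Γ := B ::ₘ Γ) (by simpa only [cons_swap] using hB))⟩
  | andR _ _ ih₁ ih₂ =>
    obtain ⟨hA₁, hB₁⟩ := ih₁ hS
    obtain ⟨hA₂, hB₂⟩ := ih₂ hS
    exact ⟨by simpa only [cons_swap] using (Der.andR (Δ := A ::ₘ _)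
      (by simpa only [cons_swap] using hA₁) (by simpa only [cons_swap] using hA₂)),
      hB₁.andR hB₂⟩
  | orL _ _ ih₁ ih₂ =>
    obtain ⟨Γ, rfl, rfl⟩ := exists_cons_of_cons_eq_cons_of_ne hS.symm (by simp)
    obtain ⟨hA₁, hB₁⟩ := ih₁ (cons_swap ..)
    obtain ⟨hA₂, hB₂⟩ := ih₂ (cons_swap ..)
    exact ⟨hA₁.orL hA₂, by simpa only [cons_swap] using (Der.orL (Γ := B ::ₘ Γ)
      (by simpa only [cons_swap] using hB₁) (by simpa only [cons_swap] using hB₂))⟩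
  | orR _ ih =>
    obtain ⟨hA, hB⟩ := ih hS
    exact ⟨by simpa only [cons_swap] using
      (Der.orR (Δ := A ::ₘ _) (by simpa only [cons_swap] using hA)), hB.orR⟩
  | @impL _ _ _ C D h₁ h₂ ih₁ ih₂ =>
    rcases cons_eq_cons.mp hS.symm with ⟨hCD, rfl⟩ | ⟨-, Γ, rfl, rfl⟩
    · obtain ⟨rfl, rfl⟩ := Formula.imp.inj hCD
      exact ⟨h₁.succ, h₂.succ⟩
    · obtain ⟨hA₁, hB₁⟩ := ih₁ rfl
      obtain ⟨hA₂, hB₂⟩ := ih₂ (cons_swap ..)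
      exact ⟨Der.impL (by simpa only [cons_swap] using hA₁) hA₂,
        by simpa only [cons_swap] using
          (Der.impL (Γ := B ::ₘ Γ) hB₁ (by simpa only [cons_swap] using hB₂))⟩
  | impR _ ih =>
    subst hS
    obtain ⟨hA, hB⟩ := ih (cons_swap ..)
    exact ⟨by simpa only [cons_swap] using
      (Der.impR (Δ := A ::ₘ _) (by simpa only [cons_swap] using hA)),
      Der.impR (by simpa only [cons_swap] using hB)⟩

/-- →R and →L are height-preserving invertible in G3cp. -/
theorem g3cp_imp_invertible (n : ℕ) (Γ Δ : Multiset Formula) (A B : Formula) :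
    (Der n Γ (Formula.imp A B ::ₘ Δ) → Der n (A ::ₘ Γ) (B ::ₘ Δ)) ∧
    (Der n (Formula.imp A B ::ₘ Γ) Δ →
      Der n Γ (A ::ₘ Δ) ∧ Der n (B ::ₘ Γ) Δ) :=
  ⟨fun h ↦ h.inv_impR rfl, fun h ↦ h.inv_impL rfl⟩
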